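/- Let f(τ) = log( τ^{5τ} (τ+2)^{τ+2} / ((τ-1)^{τ-1} (τ+1)^{5(τ+1)}) ) for τ > 1, and let τ_0 = -1/2 + sqrt(5/4 + sqrt 2). Then sup_{τ>1} f(τ) = f(τ_0) = 2 log(τ_0+2) + log(τ_0-1) - 5 log(τ_0+1) = 4 log(√2 - 1). -/

import Mathlib

noncomputable def f (τ : ℝ) : ℝ :=
  5 * τ * Real.log τ + (τ + 2) * Real.log (τ + 2)
    - (τ - 1) * Real.log (τ - 1) - 5 * (τ + 1) * Real.log (τ + 1)

lemma f_hasDeriv {x : ℝ} (hx : 1 < x) :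
    HasDerivAt f (5 * Real.log x + Real.log (x + 2) - Real.log (x - 1)
      - 5 * Real.log (x + 1)) x := by
  have h0 : x ≠ 0 := by linarith
  have h2 : x + 2 ≠ 0 := by linarith
  have hm1 : x - 1 ≠ 0 := by linarith
  have hp1 : x + 1 ≠ 0 := by linarith
  have d1 : HasDerivAt (fun t : ℝ => 5 * (t * Real.log t)) (5 * (Real.log x + 1)) x :=
    (Real.hasDerivAt_mul_log h0).const_mul 5
  have d2 : HasDerivAt (fun t : ℝ => (t + 2) * Real.log (t + 2))
      ((Real.log (x + 2) + 1) * 1) x :=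
    by have := (Real.hasDerivAt_mul_log h2).comp x ((hasDerivAt_id x).add_const 2); exact this
  have d3 : HasDerivAt (fun t : ℝ => (t - 1) * Real.log (t - 1))
      ((Real.log (x - 1) + 1) * 1) x :=
    by have := (Real.hasDerivAt_mul_log hm1).comp x ((hasDerivAt_id x).sub_const 1); exact this
  have d4 : HasDerivAt (fun t : ℝ => 5 * ((t + 1) * Real.log (t + 1)))
      (5 * ((Real.log (x + 1) + 1) * 1)) x :=
    by have := (((Real.hasDerivAt_mul_log hp1).comp x ((hasDerivAt_id x).add_const 1))).const_mul 5; exact this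
  have := ((d1.add d2).sub d3).sub d4
  have hfun : f = fun t : ℝ => 5 * (t * Real.log t) + (t + 2) * Real.log (t + 2)
      - (t - 1) * Real.log (t - 1) - 5 * ((t + 1) * Real.log (t + 1)) := by
    funext t; simp [f]; ring
  rw [hfun]
  exact this.congr_deriv (by ring)

lemma log_combo {x : ℝ} (hx : 1 < x) :
    5 * Real.log x + Real.log (x + 2) - Real.log (x - 1) - 5 * Real.log (x + 1)
      = Real.log (x ^ 5 * (x + 2)) - Real.log ((x - 1) * (x + 1) ^ 5) := by
  have h0 : x ≠ 0 := by linarith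
  have h2 : x + 2 ≠ 0 := by linarith
  have hm1 : x - 1 ≠ 0 := by linarith
  have hp1 : x + 1 ≠ 0 := by linarith
  rw [Real.log_mul (pow_ne_zero 5 h0) h2, Real.log_mul hm1 (pow_ne_zero 5 hp1),
    Real.log_pow, Real.log_pow]
  push_cast
  ring

lemma key_poly (x : ℝ) :
    x ^ 5 * (x + 2) - (x - 1) * (x + 1) ^ 5 = (2 * x + 1) * (2 - (x ^ 2 + x - 1) ^ 2) := by
  ring

lemma main_aux {a : ℝ} (ha : 1 < a) (hk : a ^ 2 + a = 1 + Real.sqrt 2) :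
    (∀ τ : ℝ, 1 < τ → f τ ≤ f a) ∧
      f a = 2 * Real.log (a + 2) + Real.log (a - 1) - 5 * Real.log (a + 1) ∧
      f a = 4 * Real.log (Real.sqrt 2 - 1) := by
  have hs2 : Real.sqrt 2 ^ 2 = 2 := Real.sq_sqrt (by norm_num)
  have hs1 : 1 < Real.sqrt 2 := by nlinarith [Real.sqrt_nonneg 2]
  -- critical point identity
  have hcrit : a ^ 5 * (a + 2) = (a - 1) * (a + 1) ^ 5 := by
    have h := key_poly a
    have : (a ^ 2 + a - 1) ^ 2 = 2 := by rw [show a ^ 2 + a - 1 = Real.sqrt 2 by linarith]; exact hs2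
    nlinarith [this, h]
  -- sign of derivative
  have hsign_pos : ∀ x : ℝ, 1 < x → x < a → 0 <
      5 * Real.log x + Real.log (x + 2) - Real.log (x - 1) - 5 * Real.log (x + 1) := by
    intro x hx1 hxa
    rw [log_combo hx1]
    have hlt : (x - 1) * (x + 1) ^ 5 < x ^ 5 * (x + 2) := by
      have hb : x ^ 2 + x - 1 < Real.sqrt 2 := by nlinarith
      have hb2 : (x ^ 2 + x - 1) ^ 2 < 2 := by nlinarith
      nlinarith [key_poly x]
    have hpos : 0 < (x - 1) * (x + 1) ^ 5 := mul_pos (by linarith) (by positivity)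
    linarith [Real.log_lt_log hpos hlt]
  have hsign_neg : ∀ x : ℝ, a < x →
      5 * Real.log x + Real.log (x + 2) - Real.log (x - 1) - 5 * Real.log (x + 1) < 0 := by
    intro x hxa
    have hx1 : 1 < x := lt_trans ha hxa
    rw [log_combo hx1]
    have hlt : x ^ 5 * (x + 2) < (x - 1) * (x + 1) ^ 5 := by
      have hb : Real.sqrt 2 < x ^ 2 + x - 1 := by nlinarith
      have hb2 : 2 < (x ^ 2 + x - 1) ^ 2 := by nlinarith
      nlinarith [key_poly x]
    have hpos : 0 < x ^ 5 * (x + 2) := by positivity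
    linarith [Real.log_lt_log hpos hlt]
  -- monotone part
  have hmono : ∀ τ : ℝ, 1 < τ → f τ ≤ f a := by
    intro τ hτ
    rcases lt_trichotomy τ a with h | h | h
    · have hsm : StrictMonoOn f (Set.Icc τ a) := by
        apply strictMonoOn_of_deriv_pos (convex_Icc τ a)
        · intro x hx
          exact ((f_hasDeriv (lt_of_lt_of_le hτ hx.1)).continuousAt).continuousWithinAt
        · intro x hx
          rw [interior_Icc] at hx
          rw [(f_hasDeriv (lt_trans hτ hx.1)).deriv]
          exact hsign_pos x (lt_trans hτ hx.1) hx.2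
      exact le_of_lt (hsm ⟨le_refl τ, le_of_lt h⟩ ⟨le_of_lt h, le_refl a⟩ h)
    · rw [h]
    · have hsa : StrictAntiOn f (Set.Icc a τ) := by
        apply strictAntiOn_of_deriv_neg (convex_Icc a τ)
        · intro x hx
          exact ((f_hasDeriv (lt_of_lt_of_le ha hx.1)).continuousAt).continuousWithinAt
        · intro x hx
          rw [interior_Icc] at hx
          rw [(f_hasDeriv (lt_trans ha hx.1)).deriv]
          exact hsign_neg x hx.1
      exact le_of_lt (hsa ⟨le_refl a, le_of_lt h⟩ ⟨le_of_lt h, le_refl τ⟩ h)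
  -- log identities at a
  have h0 : a ≠ 0 := by linarith
  have h2 : a + 2 ≠ 0 := by linarith
  have hm1 : a - 1 ≠ 0 := by linarith
  have hp1 : a + 1 ≠ 0 := by linarith
  have e2 : 5 * Real.log a + Real.log (a + 2) = Real.log (a - 1) + 5 * Real.log (a + 1) := by
    have : Real.log (a ^ 5 * (a + 2)) = Real.log ((a - 1) * (a + 1) ^ 5) := by rw [hcrit]
    rw [Real.log_mul (pow_ne_zero 5 h0) h2, Real.log_mul hm1 (pow_ne_zero 5 hp1),
      Real.log_pow, Real.log_pow] at this
    push_cast at this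
    linarith
  have hprod : (a + 2) * (a - 1) = Real.sqrt 2 - 1 := by nlinarith
  have e1 : Real.log (a + 2) + Real.log (a - 1) = Real.log (Real.sqrt 2 - 1) := by
    rw [← Real.log_mul h2 hm1, hprod]
  have e3 : Real.log a + Real.log (a + 1) = - Real.log (Real.sqrt 2 - 1) := by
    have hprod2 : a * (a + 1) = Real.sqrt 2 + 1 := by nlinarith
    have : (Real.sqrt 2 - 1) * (Real.sqrt 2 + 1) = 1 := by nlinarith
    have hinv : Real.sqrt 2 + 1 = (Real.sqrt 2 - 1)⁻¹ :=
      eq_inv_of_mul_eq_one_left (by linarith [this] : (Real.sqrt 2 + 1) * (Real.sqrt 2 - 1) = 1)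
    rw [← Real.log_mul h0 hp1, hprod2, hinv, Real.log_inv]
  have hfa : f a = 2 * Real.log (a + 2) + Real.log (a - 1) - 5 * Real.log (a + 1) := by
    simp only [f]
    nlinarith [e2, mul_le_mul_of_nonneg_left e2.le (le_of_lt (by linarith : (0:ℝ) < a))]
  refine ⟨hmono, hfa, ?_⟩
  rw [hfa]
  linarith [e1, e2, e3]

theorem sup_f_eval :
    let τ₀ : ℝ := -1 / 2 + Real.sqrt (5 / 4 + Real.sqrt 2)
    (∀ τ : ℝ, 1 < τ → f τ ≤ f τ₀) ∧
      f τ₀ = 2 * Real.log (τ₀ + 2) + Real.log (τ₀ - 1) - 5 * Real.log (τ₀ + 1) ∧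
      f τ₀ = 4 * Real.log (Real.sqrt 2 - 1) := by
  intro τ₀
  have hs2 : Real.sqrt 2 ^ 2 = 2 := Real.sq_sqrt (by norm_num)
  have hs1 : 1 < Real.sqrt 2 := by nlinarith [Real.sqrt_nonneg 2]
  have hu : Real.sqrt (5 / 4 + Real.sqrt 2) ^ 2 = 5 / 4 + Real.sqrt 2 :=
    Real.sq_sqrt (by positivity)
  have hun : 0 ≤ Real.sqrt (5 / 4 + Real.sqrt 2) := Real.sqrt_nonneg _
  have ha : 1 < τ₀ := by
    show (1:ℝ) < -1 / 2 + Real.sqrt (5 / 4 + Real.sqrt 2)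
    nlinarith
  have hk : τ₀ ^ 2 + τ₀ = 1 + Real.sqrt 2 := by
    show (-1 / 2 + Real.sqrt (5 / 4 + Real.sqrt 2)) ^ 2 + (-1 / 2 + Real.sqrt (5 / 4 + Real.sqrt 2)) = 1 + Real.sqrt 2
    nlinarith
  exact main_aux ha hk
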